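/- Let $1<r<+\infty$, $\frac{1}{q}+\frac{1}{r}=1$, $s\in(0,1)$, $1\leq p<\infty$, let $w$ be a strictly positive Borel function on $\mathbb{R}^n$, and let $X:[0,T]\to\mathbb{R}^n$ be a Borel path whose occupation measure has density $L_X^I$ with $L_X^I\in L^r(\mathbb{R}^n,w^r(x)dx)$. If $\varphi\in BV(\mathbb{R}^n)$ satisfies $U^{1-s}\|D\varphi\|\in L^{pq}(\mathbb{R}^n,w^{-q}(x)dx)$, then $X$ is $(s,p)$-variable with respect to $\varphi$, i.e. $t\mapsto U^{1-s}\|D\varphi\|(X_t)\in L^p(0,T)$. -/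

import Mathlib

open MeasureTheory Metric Set ENNReal

/-- The normalizing constant of the Riesz kernel of order `γ` on `ℝⁿ`. -/
noncomputable def rieszConst (n : ℕ) (γ : ℝ) : ℝ :=
  Real.Gamma (((n : ℝ) - γ) / 2) /
    ((2 : ℝ) ^ γ * Real.pi ^ ((n : ℝ) / 2) * Real.Gamma (γ / 2))

/-- The Riesz kernel `k_γ(x) = c(γ,n) |x|^{γ-n}`, as a `(0,∞]`-valued function. -/
noncomputable def rieszKernel (n : ℕ) (γ : ℝ) (x : EuclideanSpace ℝ (Fin n)) : ℝ≥0∞ :=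
  ENNReal.ofReal (rieszConst n γ) * ENNReal.ofReal ‖x‖ ^ (γ - (n : ℝ))

/-- The Riesz potential `U^γ μ (x) = ∫ k_γ(x-y) μ(dy)` of a measure `μ`. -/
noncomputable def rieszPotential (n : ℕ) (γ : ℝ) (μ : Measure (EuclideanSpace ℝ (Fin n)))
    (x : EuclideanSpace ℝ (Fin n)) : ℝ≥0∞ :=
  ∫⁻ y, rieszKernel n γ (x - y) ∂μ

/-- `φ ∈ BV(ℝⁿ)` with total gradient variation measure `ν = ‖Dφ‖`: `φ` is integrable, `ν` is a
finite measure and there is a polar density `σ` of unit length such that the distributional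
gradient of `φ` is `σ dν`, i.e. `∫ φ div ψ dx = -∫ ⟨ψ, σ⟩ dν` for all test vector fields. -/
def IsGradientVariation (n : ℕ) (φ : EuclideanSpace ℝ (Fin n) → ℝ)
    (ν : Measure (EuclideanSpace ℝ (Fin n))) : Prop :=
  Integrable φ ∧ IsFiniteMeasure ν ∧
    ∃ σ : EuclideanSpace ℝ (Fin n) → EuclideanSpace ℝ (Fin n), Measurable σ ∧
      (∀ᵐ x ∂ν, ‖σ x‖ = 1) ∧
      ∀ ψ : EuclideanSpace ℝ (Fin n) → EuclideanSpace ℝ (Fin n),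
        ContDiff ℝ (⊤ : ℕ∞) ψ → HasCompactSupport ψ →
        ∫ x, φ x * (∑ i : Fin n, fderiv ℝ ψ x (EuclideanSpace.single i 1) i) =
          - ∫ x, (inner ℝ (ψ x) (σ x) : ℝ) ∂ν

/-- `φ ∈ BV_loc(ℝⁿ)` with total gradient variation measure `ν = ‖Dφ‖` (local version). -/
def IsLocalGradientVariation (n : ℕ) (φ : EuclideanSpace ℝ (Fin n) → ℝ)
    (ν : Measure (EuclideanSpace ℝ (Fin n))) : Prop :=
  LocallyIntegrable φ ∧ IsLocallyFiniteMeasure ν ∧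
    ∃ σ : EuclideanSpace ℝ (Fin n) → EuclideanSpace ℝ (Fin n), Measurable σ ∧
      (∀ᵐ x ∂ν, ‖σ x‖ = 1) ∧
      ∀ ψ : EuclideanSpace ℝ (Fin n) → EuclideanSpace ℝ (Fin n),
        ContDiff ℝ (⊤ : ℕ∞) ψ → HasCompactSupport ψ →
        ∫ x, φ x * (∑ i : Fin n, fderiv ℝ ψ x (EuclideanSpace.single i 1) i) =
          - ∫ x, (inner ℝ (ψ x) (σ x) : ℝ) ∂ν

/-- `l` is the approximate limit of `φ` at `x`. -/
def HasApproxLimit (n : ℕ) (φ : EuclideanSpace ℝ (Fin n) → ℝ) (x : EuclideanSpace ℝ (Fin n))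
    (l : ℝ) : Prop :=
  Filter.Tendsto (fun r : ℝ => (∫ y in ball x r, |φ y - l|) / (volume (ball x r)).toReal)
    (nhdsWithin 0 (Ioi 0)) (nhds 0)

/-- The approximate discontinuity set `S_φ` of `φ`. -/
def approxDiscontSet (n : ℕ) (φ : EuclideanSpace ℝ (Fin n) → ℝ) : Set (EuclideanSpace ℝ (Fin n)) :=
  {x | ¬ ∃ l : ℝ, HasApproxLimit n φ x l}

/-- `φt` is a Lebesgue representative of `φ`: it is Borel and takes the approximate limit
value at every point outside `S_φ`. -/
def IsLebesgueRep (n : ℕ) (φ φt : EuclideanSpace ℝ (Fin n) → ℝ) : Prop :=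
  Measurable φt ∧ ∀ x ∉ approxDiscontSet n φ, HasApproxLimit n φ x (φt x)

/-- if the local time of `X` lies in the weighted space `L^r(w^r dx)` and the
Riesz potential `U^{1-s}‖Dφ‖` lies in `L^{pq}(w^{-q} dx)` (with `1/q + 1/r = 1`), then `X` is
`(s,p)`-variable with respect to `φ`. -/
theorem stmt_19 (n : ℕ) (hn : 0 < n) (T s p q r : ℝ) (hT : 0 < T)
    (hs0 : 0 < s) (hs1 : s < 1) (hp : 1 ≤ p) (hr1 : 1 < r)
    (hqr : 1 / q + 1 / r = 1)
    (w : EuclideanSpace ℝ (Fin n) → ℝ) (hw : Measurable w) (hw0 : ∀ x, 0 < w x)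
    (X : ℝ → EuclideanSpace ℝ (Fin n)) (hX : Measurable X)
    (L : EuclideanSpace ℝ (Fin n) → ℝ) (hL : Measurable L) (hL0 : ∀ x, 0 ≤ L x)
    (hdens : (volume.restrict (Icc (0 : ℝ) T)).map X =
      volume.withDensity fun x => ENNReal.ofReal (L x))
    (hLr : ∫⁻ x, ENNReal.ofReal (L x ^ r * w x ^ r) < ⊤)
    (φ : EuclideanSpace ℝ (Fin n) → ℝ) (ν : Measure (EuclideanSpace ℝ (Fin n)))
    (hBV : IsGradientVariation n φ ν)
    (hU : ∫⁻ x, (rieszPotential n (1 - s) ν x) ^ (p * q) *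
        (ENNReal.ofReal (w x)) ^ (-q) < ⊤) :
    ∫⁻ t in Icc (0 : ℝ) T, (rieszPotential n (1 - s) ν (X t)) ^ p < ⊤ := by
  haveI : IsFiniteMeasure ν := hBV.2.1
  set U := rieszPotential n (1 - s) ν with hUdef
  -- measurability of the Riesz potential
  have hkm : Measurable (Function.uncurry fun x y :
      EuclideanSpace ℝ (Fin n) => rieszKernel n (1 - s) (x - y)) := by
    apply Measurable.mul measurable_const
    exact ((measurable_fst.sub measurable_snd).norm.ennreal_ofReal).pow_const _
  have hUm : Measurable U := Measurable.lintegral_prod_right' hkm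
  -- conjugate exponents
  have hr0 : (0:ℝ) < r := lt_trans one_pos hr1
  have hinvr : 0 < 1 / r := by positivity
  have hinvr1 : 1 / r < 1 := by rw [div_lt_one hr0]; exact hr1
  have h1 : 1 / q = 1 - 1 / r := by linarith
  have hq0 : 0 < 1 / q := by rw [h1]; linarith
  have hqpos : (0:ℝ) < q := one_div_pos.mp hq0
  have hq1 : 1 < q := (div_lt_one hqpos).mp (by rw [h1]; linarith)
  have hc : q.HolderConjugate r := Real.holderConjugate_iff.mpr ⟨hq1, by rw [← one_div, ← one_div]; exact hqr⟩
  -- change of variables via the occupation density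
  have hUp : Measurable fun x => U x ^ p := hUm.pow_const _
  have key : ∫⁻ t in Icc (0 : ℝ) T, U (X t) ^ p
      = ∫⁻ x, ENNReal.ofReal (L x) * U x ^ p := by
    rw [← lintegral_map hUp hX, hdens,
      lintegral_withDensity_eq_lintegral_mul _ hL.ennreal_ofReal hUp]
    rfl
  rw [key]
  -- Hölder
  set F : EuclideanSpace ℝ (Fin n) → ℝ≥0∞ :=
    fun x => U x ^ p * (ENNReal.ofReal (w x))⁻¹ with hF
  set G : EuclideanSpace ℝ (Fin n) → ℝ≥0∞ :=
    fun x => ENNReal.ofReal (w x) * ENNReal.ofReal (L x) with hG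
  have hFm : Measurable F := hUp.mul hw.ennreal_ofReal.inv
  have hGm : Measurable G := hw.ennreal_ofReal.mul hL.ennreal_ofReal
  have hwne : ∀ x, ENNReal.ofReal (w x) ≠ 0 :=
    fun x => (ENNReal.ofReal_pos.mpr (hw0 x)).ne'
  have heq : ∀ x, ENNReal.ofReal (L x) * U x ^ p = F x * G x := by
    intro x
    simp only [hF, hG]
    rw [mul_assoc, ← mul_assoc (ENNReal.ofReal (w x))⁻¹,
      ENNReal.inv_mul_cancel (hwne x) ENNReal.ofReal_ne_top, one_mul, mul_comm]
  calc ∫⁻ x, ENNReal.ofReal (L x) * U x ^ p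
      = ∫⁻ x, F x * G x := by simp_rw [heq]
    _ ≤ (∫⁻ x, F x ^ q) ^ (1/q) * (∫⁻ x, G x ^ r) ^ (1/r) :=
        ENNReal.lintegral_mul_le_Lp_mul_Lq volume hc hFm.aemeasurable hGm.aemeasurable
    _ < ⊤ := by
        apply ENNReal.mul_lt_top
        · refine (ENNReal.rpow_lt_top_of_nonneg (le_of_lt hq0) ?_)
          have : ∫⁻ x, F x ^ q
              = ∫⁻ x, U x ^ (p * q) * (ENNReal.ofReal (w x)) ^ (-q) := by
            congr 1; funext x
            simp only [hF]
            rw [ENNReal.mul_rpow_of_nonneg _ _ hqpos.le, ← ENNReal.rpow_mul,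
              ENNReal.inv_rpow, ← ENNReal.rpow_neg]
          rw [this]; exact hU.ne
        · refine (ENNReal.rpow_lt_top_of_nonneg (by positivity) ?_)
          have : ∫⁻ x, G x ^ r = ∫⁻ x, ENNReal.ofReal (L x ^ r * w x ^ r) := by
            congr 1; funext x
            simp only [hG]
            rw [← ENNReal.ofReal_mul (hw0 x).le,
              ENNReal.ofReal_rpow_of_nonneg (mul_nonneg (hw0 x).le (hL0 x)) hr0.le,
              Real.mul_rpow (hw0 x).le (hL0 x), mul_comm (w x ^ r)]
          rw [this]; exact hLr.ne
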